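/- Let $g, h : [0, \infty) \to \mathbb{R}$ be bounded measurable functions such that $\int_0^\infty e^{-\mu t} g(t)\, dt = \int_0^\infty e^{-\mu t} h(t)\, dt$ for all $\mu > K$, for some $K > 0$. Then $g(t) = h(t)$ for Lebesgue-almost every $t \geq 0$. -/

import Mathlib

open MeasureTheory Real

/-!
Put `F t = exp (-μ₀ t) (g t - h t)` with `μ₀ > K`. Then `F` is integrable on `(0, ∞)` and the
hypothesis says `∫ exp (-n t) F t = 0` for every `n : ℕ`, i.e. `F` annihilates every polynomial
in `exp (-t)`. Under `x = exp (-t)` the half-line `[0, ∞)` becomes `(0, 1]`, so by Weierstrass on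
`[0, 1]` these polynomials approximate uniformly on `[0, ∞)` every continuous function with a
limit at `∞`, in particular every smooth test function supported in `(0, ∞)`. Hence `F`, and so
`g - h`, vanishes almost everywhere on `(0, ∞)`.
-/

open Filter Topology Set Polynomial

theorem exp_neg_mem_Icc {t : ℝ} (ht : 0 ≤ t) : exp (-t) ∈ Icc (0 : ℝ) 1 :=
  ⟨(exp_pos _).le, exp_le_one_iff.2 (neg_nonpos.2 ht)⟩

theorem continuous_update_comp_neg_log {ψ : ℝ → ℝ} {L : ℝ} (hψ : Continuous ψ)
    (hL : Tendsto ψ atTop (𝓝 L)) :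
    Continuous (Function.update (fun x => ψ (-log x)) 0 L) := by
  refine continuous_iff_continuousAt.2 fun x => ?_
  rcases eq_or_ne x 0 with rfl | hx
  · exact continuousAt_update_same.2 <|
      hL.comp (tendsto_neg_atBot_atTop.comp tendsto_log_nhdsNE_zero)
  · exact (continuousAt_update_of_ne hx).2 (hψ.continuousAt.comp (continuousAt_log hx).neg)

theorem exists_polynomial_near_comp_exp_neg {ψ : ℝ → ℝ} {L : ℝ} (hψ : Continuous ψ)
    (hL : Tendsto ψ atTop (𝓝 L)) {ε : ℝ} (hε : 0 < ε) :
    ∃ p : ℝ[X], ∀ t, 0 ≤ t → |p.eval (exp (-t)) - ψ t| < ε := by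
  obtain ⟨p, hp⟩ := exists_polynomial_near_of_continuousOn 0 1 _
    (continuous_update_comp_neg_log hψ hL).continuousOn ε hε
  refine ⟨p, fun t ht => ?_⟩
  simpa [Function.update_of_ne (exp_pos _).ne'] using hp _ (exp_neg_mem_Icc ht)

section ExpMoments

variable {F : ℝ → ℝ}

theorem integrableOn_eval_exp_neg_mul (hF : IntegrableOn F (Ioi 0)) (p : ℝ[X]) :
    IntegrableOn (fun t => p.eval (exp (-t)) * F t) (Ioi 0) := by
  obtain ⟨B, hB⟩ := isCompact_Icc.exists_bound_of_continuousOn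
    (p.continuous.continuousOn (s := Icc (0 : ℝ) 1))
  exact hF.bdd_mul (by fun_prop) <| (ae_restrict_iff' measurableSet_Ioi).2 <|
    ae_of_all _ fun t ht => hB _ (exp_neg_mem_Icc (le_of_lt ht))

theorem integral_eval_exp_neg_mul_eq_zero (hF : IntegrableOn F (Ioi 0))
    (h : ∀ n : ℕ, ∫ t in Ioi 0, exp (-n * t) * F t = 0) (p : ℝ[X]) :
    ∫ t in Ioi 0, p.eval (exp (-t)) * F t = 0 := by
  have hpow : ∀ (n : ℕ) t, exp (-t) ^ n = exp (-n * t) := fun n t => by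
    rw [← exp_nat_mul, neg_mul_comm]
  have hint : ∀ n : ℕ, IntegrableOn (fun t => exp (-t) ^ n * F t) (Ioi 0) := fun n => by
    simpa using integrableOn_eval_exp_neg_mul hF (X ^ n)
  simp_rw [eval_eq_sum_range, Finset.sum_mul, mul_assoc]
  rw [integral_finsetSum _ fun n _ => (hint n).const_mul _]
  refine Finset.sum_eq_zero fun n _ => ?_
  simp_rw [integral_const_mul, hpow, h, mul_zero]

theorem integral_mul_eq_zero_of_tendsto_atTop (hF : IntegrableOn F (Ioi 0))
    (h : ∀ n : ℕ, ∫ t in Ioi 0, exp (-n * t) * F t = 0)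
    {ψ : ℝ → ℝ} {L : ℝ} (hψ : Continuous ψ)
    (hL : Tendsto ψ atTop (𝓝 L)) : ∫ t in Ioi 0, ψ t * F t = 0 := by
  set C := ∫ t in Ioi 0, |F t|
  have hC : 0 ≤ C := setIntegral_nonneg measurableSet_Ioi fun t _ => abs_nonneg _
  refine abs_nonpos_iff.1 <| le_of_forall_pos_le_add fun δ hδ => ?_
  set ε := δ / (C + 1)
  obtain ⟨p, hp⟩ := exists_polynomial_near_comp_exp_neg hψ hL (by positivity : 0 < ε)
  have hclose : ∀ᵐ t ∂volume.restrict (Ioi 0), ‖ψ t - p.eval (exp (-t))‖ ≤ ε :=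
    (ae_restrict_iff' measurableSet_Ioi).2 <| ae_of_all _ fun t ht => by
      rw [norm_eq_abs, abs_sub_comm]
      exact (hp t (le_of_lt ht)).le
  have hdiff : IntegrableOn (fun t => (ψ t - p.eval (exp (-t))) * F t) (Ioi 0) :=
    hF.bdd_mul (by fun_prop) hclose
  calc |∫ t in Ioi 0, ψ t * F t|
      = |∫ t in Ioi 0, (ψ t - p.eval (exp (-t))) * F t + p.eval (exp (-t)) * F t| := by
        simp only [sub_mul, sub_add_cancel]
    _ = ‖∫ t in Ioi 0, (ψ t - p.eval (exp (-t))) * F t‖ := by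
        rw [integral_add hdiff (integrableOn_eval_exp_neg_mul hF p),
          integral_eval_exp_neg_mul_eq_zero hF h, add_zero, norm_eq_abs]
    _ ≤ ∫ t in Ioi 0, ε * |F t| := by
        refine norm_integral_le_of_norm_le (hF.abs.const_mul _) ?_
        filter_upwards [hclose] with t ht
        rw [norm_mul, norm_eq_abs (F t)]
        exact mul_le_mul_of_nonneg_right ht (abs_nonneg _)
    _ = ε * C := integral_const_mul _ _
    _ ≤ 0 + δ := by
        rw [zero_add, div_mul_eq_mul_div, div_le_iff₀ (by positivity)]
        nlinarith

theorem ae_eq_zero_of_forall_integral_exp_neg_nat_mul_eq_zero (hF : IntegrableOn F (Ioi 0))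
    (h : ∀ n : ℕ, ∫ t in Ioi 0, exp (-n * t) * F t = 0) :
    ∀ᵐ t ∂volume.restrict (Ioi 0), F t = 0 := by
  rw [ae_restrict_iff' measurableSet_Ioi]
  refine isOpen_Ioi.ae_eq_zero_of_integral_contDiff_smul_eq_zero hF.locallyIntegrableOn
    fun ψ hψ hψc hψU => ?_
  have hψ0 : ∀ t ∉ Ioi (0 : ℝ), ψ t • F t = 0 := fun t ht => by
    rw [image_eq_zero_of_notMem_tsupport (fun h => ht (hψU h)), zero_smul]
  rw [← setIntegral_eq_integral_of_forall_compl_eq_zero hψ0]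
  exact integral_mul_eq_zero_of_tendsto_atTop hF h hψ.continuous
    (hψc.is_zero_at_infty.mono_left atTop_le_cocompact)

end ExpMoments

theorem laplace_transform_injective_general (g h : ℝ → ℝ) (K : ℝ)
    (hgm : Measurable g) (hhm : Measurable h)
    (Cg : ℝ) (hgb : ∀ t, |g t| ≤ Cg)
    (Ch : ℝ) (hhb : ∀ t, |h t| ≤ Ch)
    (heq : ∀ μ : ℝ, K < μ →
      ∫ t in Set.Ioi (0 : ℝ), exp (-μ * t) * g t =
      ∫ t in Set.Ioi (0 : ℝ), exp (-μ * t) * h t) :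
    ∀ᵐ t ∂(volume.restrict (Set.Ici (0 : ℝ))), g t = h t := by
  have hint : ∀ {u : ℝ → ℝ} {C μ : ℝ}, Measurable u → (∀ t, |u t| ≤ C) → 0 < μ →
      IntegrableOn (fun t => exp (-μ * t) * u t) (Ioi 0) := fun hu hC hμ =>
    (exp_neg_integrableOn_Ioi 0 hμ).mul_bdd hu.aestronglyMeasurable (ae_of_all _ hC)
  set μ₀ := |K| + 1
  have hμ₀ : 0 < μ₀ := by positivity
  have hF : IntegrableOn (fun t => exp (-μ₀ * t) * (g t - h t)) (Ioi 0) :=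
    hint (hgm.sub hhm) (fun t => (abs_sub _ _).trans (add_le_add (hgb t) (hhb t))) hμ₀
  have hmoments : ∀ n : ℕ, ∫ t in Ioi 0, exp (-n * t) * (exp (-μ₀ * t) * (g t - h t)) = 0 := by
    intro n
    have hμ : 0 < μ₀ + n := by positivity
    have hexp : ∀ t, exp (-n * t) * (exp (-μ₀ * t) * (g t - h t))
        = exp (-(μ₀ + n) * t) * g t - exp (-(μ₀ + n) * t) * h t := fun t => by
      rw [← mul_assoc, ← exp_add, mul_sub]; ring_nf
    simp_rw [hexp]
    rw [integral_sub (hint hgm hgb hμ) (hint hhm hhb hμ),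
      heq _ (by linarith [le_abs_self K, (Nat.cast_nonneg n : (0 : ℝ) ≤ n)]), sub_self]
  rw [← Measure.restrict_congr_set Ioi_ae_eq_Ici]
  filter_upwards [ae_eq_zero_of_forall_integral_exp_neg_nat_mul_eq_zero hF hmoments] with t ht
  exact sub_eq_zero.1 ((mul_eq_zero.1 ht).resolve_left (exp_pos _).ne')

/-- Injectivity of the Laplace transform: if `g, h : [0,∞) → ℝ` are bounded measurable and
`∫₀^∞ e^{-μt} g(t) dt = ∫₀^∞ e^{-μt} h(t) dt` for all `μ > K` (some `K > 0`), then
`g = h` Lebesgue-almost everywhere on `[0,∞)`. -/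
theorem laplace_transform_injective (g h : ℝ → ℝ) (K : ℝ) (hK : 0 < K)
    (hgm : Measurable g) (hhm : Measurable h)
    (Cg : ℝ) (hgb : ∀ t, |g t| ≤ Cg)
    (Ch : ℝ) (hhb : ∀ t, |h t| ≤ Ch)
    (heq : ∀ μ : ℝ, K < μ →
      ∫ t in Set.Ioi (0 : ℝ), exp (-μ * t) * g t =
      ∫ t in Set.Ioi (0 : ℝ), exp (-μ * t) * h t) :
    ∀ᵐ t ∂(volume.restrict (Set.Ici (0 : ℝ))), g t = h t :=
  laplace_transform_injective_general g h K hgm hhm Cg hgb Ch hhb heq
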